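/- Let 𝒳 = χ^⊕ be a cyclically symmetric homogeneous polynomial of degree 2s+2 on ℝ^N × ℝ^N (s ≥ 1), and let T^t denote the time-t flow of its Hamiltonian vector field X_𝒳. Let R' > 0 and 0 < δ < R', and assume |X_𝒳|_{R'} < δ/e. Then for every |t| ≤ 1 and every z with ‖z‖ ≤ R' − δ one has ‖T^t(z) − z‖ ≤ (1/(1−c)) |X_𝒳|_1 ‖z‖^{2s+1}, where c := (e/δ) |X_𝒳|_{R'} < 1. The estimate holds with ‖·‖ either the Euclidean (ℓ²) or the supremum (ℓ^∞) norm on ℝ^{2N}. -/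

import Mathlib

/-!
Cyclic symmetry makes every component of `X_𝒳(z)` an evaluation of `∂𝒳/∂y_1` or `−∂𝒳/∂x_1` at a
cyclic shift of `z`. Hence `|X_𝒳(z)| ≤ |X_𝒳|₁ ‖z‖^{2s+1}` in the supremum norm, and also in `ℓ²`:
there each monomial spends one factor on a single variable, whose shifts are distinct coordinates.
Homogeneity gives `|X_𝒳|_{R'} = |X_𝒳|₁ R'^{2s+1}`.

For the flow, a barrier argument keeps an orbit starting in the ball of radius `R' − δ` inside the
ball of radius `R'` up to time `1`, so its largest displacement `M` on `[0, t]` is at most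
`|X_𝒳|_{R'} < δ/e`. The mean value theorem gives `M ≤ |X_𝒳|₁ (‖z‖ + M)^{2s+1}`, and convexity of
`r ↦ r^{2s+1}` on `[‖z‖, ‖z‖ + δ/e] ⊆ [0, R']` bounds the right-hand side by
`|X_𝒳|₁ ‖z‖^{2s+1} + c M`; solve for `M`.
-/

open MvPolynomial Finset Real

/-- index set for the `2N` variables: `inl j` ↦ `x_j`, `inr j` ↦ `y_j` (indices mod `N`). -/
abbrev Idx (N : ℕ) := Fin N ⊕ Fin N

open scoped Fin.IntCast in
/-- the cyclic shift `τ^s` (`s ∈ ℤ`) acting on polynomials: `τ^s X_j = X_{j+s}`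
(indices mod `N`), separately on the `x` and `y` variables, so that
`(τ^s f)(x,y) = f(τ^s x, τ^s y)`. -/
noncomputable def tauPow (N : ℕ) [NeZero N] (s : ℤ) (f : MvPolynomial (Idx N) ℝ) :
    MvPolynomial (Idx N) ℝ :=
  rename (Sum.map (· + (s : Fin N)) (· + (s : Fin N))) f

/-- `f ↦ f^⊕ := ∑_{l=1}^N τ^l f`. -/
noncomputable def oplus (N : ℕ) [NeZero N] (f : MvPolynomial (Idx N) ℝ) :
    MvPolynomial (Idx N) ℝ :=
  ∑ l ∈ Finset.range N, tauPow N ((l : ℤ) + 1) f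

/-- the polynomial norm `‖f‖_R`; for a homogeneous polynomial of degree `s` it equals
`R^s ∑_{|j|+|k|=s} |f_{j,k}|`. -/
noncomputable def pnorm {N : ℕ} (R : ℝ) (f : MvPolynomial (Idx N) ℝ) : ℝ :=
  ∑ d ∈ f.support, |f.coeff d| * R ^ (d.sum fun _ e => e)

/-- the Poisson bracket `{f,g} = ∑_j (∂f/∂x_j ∂g/∂y_j − ∂f/∂y_j ∂g/∂x_j)`. -/
noncomputable def poisson (N : ℕ) (f g : MvPolynomial (Idx N) ℝ) : MvPolynomial (Idx N) ℝ :=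
  ∑ j : Fin N,
    (pderiv (Sum.inl j) f * pderiv (Sum.inr j) g - pderiv (Sum.inr j) f * pderiv (Sum.inl j) g)

/-- the norm `|X_F|_R := ‖X_1‖_R + ‖X_{N+1}‖_R` of the Hamiltonian vector field
`X_F = J∇F` (here `X_1 = ∂F/∂y_1` and `X_{N+1} = −∂F/∂x_1`). -/
noncomputable def hamNorm (N : ℕ) [NeZero N] (R : ℝ) (F : MvPolynomial (Idx N) ℝ) : ℝ :=
  pnorm R (pderiv (Sum.inr 0) F) + pnorm R (-pderiv (Sum.inl 0) F)

/-- the Hamiltonian vector field `X_F = J∇F` as a map on the phase space `ℝ^{2N}`: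
`ẋ_j = ∂F/∂y_j`, `ẏ_j = −∂F/∂x_j`. -/
noncomputable def Xvec (N : ℕ) (F : MvPolynomial (Idx N) ℝ) (z : Idx N → ℝ) : Idx N → ℝ :=
  Sum.elim (fun j => eval z (pderiv (Sum.inr j) F)) (fun j => -eval z (pderiv (Sum.inl j) F))

/-- the euclidean (`ℓ²`) norm on `ℝ^{2N}`; the supremum (`ℓ^∞`) norm is the `Pi` norm `‖·‖`. -/
noncomputable def enorm₂ {N : ℕ} (z : Idx N → ℝ) : ℝ :=
  Real.sqrt (∑ l, z l ^ 2)


section Shift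

variable {N : ℕ}

def shift (a : Fin N) : Idx N → Idx N := Sum.map (· + a) (· + a)

lemma shift_injective (a : Fin N) : Function.Injective (shift a) :=
  (add_left_injective a).sumMap (add_left_injective a)

lemma shift_comp_shift (a b : Fin N) : shift a ∘ shift b = shift (b + a) := by
  funext i; cases i <;> simp [shift, add_assoc]

lemma injective_shift_apply (i : Idx N) : Function.Injective fun a : Fin N => shift a i := by
  cases i <;> intro a b h <;> simpa [shift] using h

def IsShiftInvariant (F : MvPolynomial (Idx N) ℝ) : Prop :=
  ∀ a : Fin N, rename (shift a) F = F

open scoped Fin.CommRing in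
lemma oplus_eq_sum_rename_shift [NeZero N] (χ : MvPolynomial (Idx N) ℝ) :
    oplus N χ = ∑ a : Fin N, rename (shift a) χ := by
  rw [oplus, ← Fin.sum_univ_eq_sum_range (fun l => tauPow N ((l : ℤ) + 1) χ)]
  refine Fintype.sum_equiv (Equiv.addRight 1) _ _ fun a => ?_
  simp [tauPow, shift]

lemma isShiftInvariant_oplus [NeZero N] (χ : MvPolynomial (Idx N) ℝ) :
    IsShiftInvariant (oplus N χ) := by
  intro b
  simp only [oplus_eq_sum_rename_shift, map_sum, rename_rename, shift_comp_shift]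
  exact Fintype.sum_equiv (Equiv.addRight b) _ _ fun a => rfl

namespace IsShiftInvariant

variable {F : MvPolynomial (Idx N) ℝ} (hF : IsShiftInvariant F)
include hF

lemma pderiv_shift (a : Fin N) (i : Idx N) :
    pderiv (shift a i) F = rename (shift a) (pderiv i F) := by
  conv_lhs => rw [← hF a]
  exact pderiv_rename (shift_injective a) i F

variable [NeZero N]

lemma xvec_inl (z : Idx N → ℝ) (j : Fin N) :
    Xvec N F z (Sum.inl j) = eval (z ∘ shift j) (pderiv (Sum.inr 0) F) := by
  rw [← eval_rename, ← hF.pderiv_shift]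
  simp [Xvec, shift]

lemma xvec_inr (z : Idx N → ℝ) (j : Fin N) :
    Xvec N F z (Sum.inr j) = -eval (z ∘ shift j) (pderiv (Sum.inl 0) F) := by
  rw [← eval_rename, ← hF.pderiv_shift]
  simp [Xvec, shift]

end IsShiftInvariant

end Shift

lemma abs_prod_pow_le {ι : Type*} [Fintype ι] {x : ι → ℝ} {W : ℝ} (hx : ∀ i, |x i| ≤ W)
    (d : ι →₀ ℕ) : |∏ i, x i ^ d i| ≤ W ^ d.degree := by
  rw [abs_prod, Finsupp.degree_eq_sum, ← prod_pow_eq_pow_sum]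
  gcongr with i
  rw [abs_pow]
  gcongr
  exact hx i

lemma abs_prod_pow_le_mul_abs {ι : Type*} [Fintype ι] {x : ι → ℝ} {W : ℝ}
    (hx : ∀ i, |x i| ≤ W) {d : ι →₀ ℕ} {i₀ : ι} (hi₀ : d i₀ ≠ 0) :
    |∏ i, x i ^ d i| ≤ W ^ (d.degree - 1) * |x i₀| := by
  obtain ⟨e, rfl⟩ : ∃ e, d = e + Finsupp.single i₀ 1 :=
    ⟨d - Finsupp.single i₀ 1, (tsub_add_cancel_of_le (by simpa [Nat.one_le_iff_ne_zero])).symm⟩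
  have hsplit : ∏ i, x i ^ (e + Finsupp.single i₀ 1 : ι →₀ ℕ) i = (∏ i, x i ^ e i) * x i₀ := by
    simp only [Finsupp.coe_add, Pi.add_apply, pow_add, prod_mul_distrib, ← Finsupp.prod_pow]
    simp
  rw [hsplit, map_add, Finsupp.degree_single, Nat.add_sub_cancel, abs_mul]
  gcongr
  exact abs_prod_pow_le hx e

section CoefficientNorm

variable {N : ℕ} {f : MvPolynomial (Idx N) ℝ} {p : ℕ}

lemma pnorm_nonneg {R : ℝ} (hR : 0 ≤ R) (f : MvPolynomial (Idx N) ℝ) : 0 ≤ pnorm R f :=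
  sum_nonneg fun _ _ => mul_nonneg (abs_nonneg _) (pow_nonneg hR _)

lemma pnorm_neg (R : ℝ) (f : MvPolynomial (Idx N) ℝ) : pnorm R (-f) = pnorm R f := by
  simp [pnorm]

lemma pnorm_one (f : MvPolynomial (Idx N) ℝ) : pnorm 1 f = ∑ d ∈ f.support, |coeff d f| := by
  simp [pnorm]

namespace MvPolynomial.IsHomogeneous

variable (hf : f.IsHomogeneous p)
include hf

lemma pnorm_eq (R : ℝ) : pnorm R f = pnorm 1 f * R ^ p := by
  rw [pnorm, pnorm_one, sum_mul]
  refine sum_congr rfl fun d hd => ?_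
  rw [show (d.sum fun _ e => e) = p from (hf.degree_eq_sum_deg_support hd).symm]

lemma abs_eval_le {x : Idx N → ℝ} {W : ℝ} (hx : ∀ i, |x i| ≤ W) :
    |eval x f| ≤ pnorm 1 f * W ^ p := by
  rw [eval_eq', pnorm_one, sum_mul]
  refine (abs_sum_le_sum_abs _ _).trans (sum_le_sum fun d hd => ?_)
  rw [abs_mul, ← show d.degree = p from (hf.degree_eq_sum_deg_support hd).symm]
  gcongr
  exact abs_prod_pow_le hx d

end MvPolynomial.IsHomogeneous

end CoefficientNorm

section Euclidean

open WithLp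

lemma enorm₂_eq_norm_toLp {N : ℕ} (z : Idx N → ℝ) : enorm₂ z = ‖toLp 2 z‖ := by
  simp [enorm₂, EuclideanSpace.norm_eq]

variable {ι : Type*} [Fintype ι]

lemma abs_le_norm_toLp (x : ι → ℝ) (i : ι) : |x i| ≤ ‖toLp 2 x‖ :=
  PiLp.norm_apply_le (toLp 2 x) i

lemma norm_toLp_le_of_abs_le {x y : ι → ℝ} (h : ∀ i, |x i| ≤ |y i|) :
    ‖toLp 2 x‖ ≤ ‖toLp 2 y‖ := by
  simp only [EuclideanSpace.norm_eq, Real.norm_eq_abs, sq_abs]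
  exact Real.sqrt_le_sqrt (sum_le_sum fun i _ => sq_le_sq.2 (h i))

lemma norm_toLp_comp_le {κ : Type*} [Fintype κ] {e : κ → ι} (he : Function.Injective e)
    (x : ι → ℝ) : ‖toLp 2 (x ∘ e)‖ ≤ ‖toLp 2 x‖ := by
  simp only [EuclideanSpace.norm_eq, Function.comp_apply]
  gcongr
  exact (sum_map univ ⟨e, he⟩ fun i => ‖x i‖ ^ 2).symm.trans_le
    (sum_le_univ_sum_of_nonneg fun _ => sq_nonneg _)

lemma HasDerivAt.toLp {u : ℝ → ι → ℝ} {u' : ι → ℝ} {τ : ℝ} (hu : HasDerivAt u u' τ) :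
    HasDerivAt (fun σ => toLp 2 (u σ)) (toLp 2 u') τ :=
  (PiLp.hasFDerivAt_toLp 2 (u τ)).comp_hasDerivAt τ hu

variable {N : ℕ}

lemma norm_toLp_prod_shift_le (z : Idx N → ℝ) {d : Idx N →₀ ℕ} (hd : d ≠ 0) :
    ‖toLp 2 (fun j : Fin N => ∏ i, z (shift j i) ^ d i)‖ ≤ ‖toLp 2 z‖ ^ d.degree := by
  classical
  obtain ⟨i₀, hi₀⟩ := Finsupp.ne_iff.mp hd
  set W := ‖toLp 2 z‖
  have hW : 0 ≤ W := norm_nonneg _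
  have hpoint (j : Fin N) :
      |∏ i, z (shift j i) ^ d i| ≤ |W ^ (d.degree - 1) * z (shift j i₀)| := by
    rw [abs_mul, abs_of_nonneg (pow_nonneg hW _)]
    exact abs_prod_pow_le_mul_abs (fun i => abs_le_norm_toLp z _) hi₀
  calc ‖toLp 2 (fun j : Fin N => ∏ i, z (shift j i) ^ d i)‖
      ≤ ‖toLp 2 (fun j : Fin N => W ^ (d.degree - 1) * z (shift j i₀))‖ :=
        norm_toLp_le_of_abs_le hpoint
    _ = W ^ (d.degree - 1) * ‖toLp 2 (z ∘ fun j : Fin N => shift j i₀)‖ := by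
        rw [← norm_smul_of_nonneg (pow_nonneg hW _)]
        rfl
    _ ≤ W ^ (d.degree - 1) * W := by
        gcongr
        exact norm_toLp_comp_le (injective_shift_apply i₀) z
    _ = W ^ d.degree := by
        rw [← pow_succ, Nat.sub_add_cancel (Nat.one_le_iff_ne_zero.2 ?_)]
        simpa [Finsupp.degree_eq_zero_iff] using hd

lemma MvPolynomial.IsHomogeneous.norm_toLp_eval_shift_le {f : MvPolynomial (Idx N) ℝ} {p : ℕ}
    (hf : f.IsHomogeneous p) (hp : p ≠ 0) (z : Idx N → ℝ) :
    ‖toLp 2 (fun j : Fin N => eval (z ∘ shift j) f)‖ ≤ pnorm 1 f * ‖toLp 2 z‖ ^ p := by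
  have hsum : toLp 2 (fun j : Fin N => eval (z ∘ shift j) f) =
      ∑ d ∈ f.support, coeff d f • toLp 2 (fun j : Fin N => ∏ i, z (shift j i) ^ d i) := by
    ext j
    simp [eval_eq']
  rw [hsum, pnorm_one, sum_mul]
  refine (norm_sum_le _ _).trans (sum_le_sum fun d hd => ?_)
  have hdeg : d.degree = p := (hf.degree_eq_sum_deg_support hd).symm
  rw [norm_smul, Real.norm_eq_abs, ← hdeg]
  gcongr
  exact norm_toLp_prod_shift_le z (by rintro rfl; simp [← hdeg] at hp)

end Euclidean

section HamiltonianField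

open WithLp

variable {N : ℕ} [NeZero N] {F : MvPolynomial (Idx N) ℝ} {p : ℕ}

lemma hamNorm_nonneg {R : ℝ} (hR : 0 ≤ R) (F : MvPolynomial (Idx N) ℝ) : 0 ≤ hamNorm N R F :=
  add_nonneg (pnorm_nonneg hR _) (pnorm_nonneg hR _)

lemma MvPolynomial.IsHomogeneous.hamNorm_eq (hF : F.IsHomogeneous (p + 1)) (R : ℝ) :
    hamNorm N R F = hamNorm N 1 F * R ^ p := by
  rw [hamNorm, hamNorm, hF.pderiv.pnorm_eq, hF.pderiv.neg.pnorm_eq, Nat.add_sub_cancel, add_mul]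

namespace IsShiftInvariant

variable (hF : IsShiftInvariant F) (hH : F.IsHomogeneous (p + 1))
include hF hH

lemma norm_xvec_le (z : Idx N → ℝ) : ‖Xvec N F z‖ ≤ hamNorm N 1 F * ‖z‖ ^ p := by
  have hz (j : Fin N) (i : Idx N) : |(z ∘ shift j) i| ≤ ‖z‖ := norm_le_pi_norm z _
  have hA := pnorm_nonneg zero_le_one (pderiv (Sum.inr 0) F)
  have hB := pnorm_nonneg zero_le_one (-pderiv (Sum.inl 0) F)
  refine (pi_norm_le_iff_of_nonneg (by rw [hamNorm]; positivity)).2 ?_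
  rintro (j | j)
  · rw [Real.norm_eq_abs, hF.xvec_inl]
    refine (hH.pderiv.abs_eval_le (hz j)).trans ?_
    rw [hamNorm, add_mul]
    exact le_add_of_nonneg_right (by positivity)
  · rw [Real.norm_eq_abs, hF.xvec_inr, abs_neg, ← abs_neg, ← map_neg]
    refine (hH.pderiv.neg.abs_eval_le (hz j)).trans ?_
    rw [hamNorm, add_mul]
    exact le_add_of_nonneg_left (by positivity)

lemma norm_toLp_xvec_le (hp : p ≠ 0) (z : Idx N → ℝ) :
    ‖toLp 2 (Xvec N F z)‖ ≤ hamNorm N 1 F * ‖toLp 2 z‖ ^ p := by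
  set gx := toLp 2 (fun j : Fin N => eval (z ∘ shift j) (pderiv (Sum.inr 0) F))
  set gy := toLp 2 (fun j : Fin N => eval (z ∘ shift j) (pderiv (Sum.inl 0) F))
  have hgx : ‖gx‖ ≤ pnorm 1 (pderiv (Sum.inr 0) F) * ‖toLp 2 z‖ ^ p :=
    (hH.pderiv (i := Sum.inr 0)).norm_toLp_eval_shift_le hp z
  have hgy : ‖gy‖ ≤ pnorm 1 (pderiv (Sum.inl 0) F) * ‖toLp 2 z‖ ^ p :=
    (hH.pderiv (i := Sum.inl 0)).norm_toLp_eval_shift_le hp z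
  have hsplit : ‖toLp 2 (Xvec N F z)‖ ^ 2 = ‖gx‖ ^ 2 + ‖gy‖ ^ 2 := by
    simp [gx, gy, EuclideanSpace.norm_sq_eq, Fintype.sum_sum_type, hF.xvec_inl, hF.xvec_inr]
  rw [hamNorm, pnorm_neg, add_mul]
  refine le_of_pow_le_pow_left₀ two_ne_zero
    (add_nonneg ((norm_nonneg gx).trans hgx) ((norm_nonneg gy).trans hgy)) ?_
  nlinarith [norm_nonneg gx, norm_nonneg gy]

end IsShiftInvariant

end HamiltonianField

lemma add_pow_le_pow_add_div_mul {a M h R : ℝ} (p : ℕ) (ha : 0 ≤ a) (hM : 0 ≤ M) (hMh : M ≤ h)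
    (hR : a + h ≤ R) : (a + M) ^ p ≤ a ^ p + M / h * R ^ p := by
  rcases hM.eq_or_lt with rfl | hM'
  · simp
  have hh : 0 < h := hM'.trans_le hMh
  set θ := M / h
  have hθ : θ ≤ 1 := (div_le_one hh).2 hMh
  have hconv := (convexOn_pow p).2 (Set.mem_Ici.2 ha) (Set.mem_Ici.2 (by linarith : 0 ≤ a + h))
    (sub_nonneg.2 hθ) (by positivity) (sub_add_cancel 1 θ)
  have hpt : (1 - θ) • a + θ • (a + h) = a + M := by
    simp only [smul_eq_mul, θ]; field_simp; ring
  rw [hpt, smul_eq_mul, smul_eq_mul] at hconv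
  have : (a + h) ^ p ≤ R ^ p := by gcongr
  nlinarith [pow_nonneg ha p, show 0 ≤ θ by positivity]

section Flow

open Set

variable {E : Type*} [NormedAddCommGroup E] [NormedSpace ℝ E] {X : E → E} {u : ℝ → E}

lemma norm_le_of_norm_vectorField_lt {R δ : ℝ} (hδ : 0 ≤ δ) (hX : ∀ z, ‖z‖ ≤ R → ‖X z‖ < δ)
    (hu : ∀ τ ∈ Icc (0 : ℝ) 1, HasDerivAt u (X (u τ)) τ) (h0 : ‖u 0‖ ≤ R - δ) :
    ∀ τ ∈ Icc (0 : ℝ) 1, ‖u τ‖ ≤ R := by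
  have hin : ∀ τ ∈ Icc (0 : ℝ) 1, ‖u τ - u 0‖ ≤ δ * τ → ‖u τ‖ ≤ R := fun τ hτ hle =>
    (norm_le_norm_add_norm_sub' (u τ) (u 0)).trans (by nlinarith [hτ.1, hτ.2])
  have hfence : ∀ τ ∈ Icc (0 : ℝ) 1, ‖u τ - u 0‖ ≤ δ * τ :=
    image_norm_le_of_norm_deriv_right_lt_deriv_boundary (f := fun τ => u τ - u 0)
      (fun τ hτ => ((hu τ hτ).continuousAt.sub continuousAt_const).continuousWithinAt)
      (fun τ hτ => ((hu τ (Ico_subset_Icc_self hτ)).sub_const (u 0)).hasDerivWithinAt)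
      (by simp) (fun τ => (hasDerivAt_id τ).const_mul δ |>.congr_deriv (mul_one δ))
      (fun τ hτ hnorm => hX _ (hin τ (Ico_subset_Icc_self hτ) hnorm.le))
  exact fun τ hτ => hin τ hτ (hfence τ hτ)

variable {p : ℕ} {K R δ h : ℝ} (hK : 0 ≤ K) (hh : 0 < h) (hhδ : h ≤ δ)
  (hX : ∀ z, ‖z‖ ≤ R → ‖X z‖ ≤ K * ‖z‖ ^ p) (hc : K * R ^ p < h)
include hK hh hhδ hX hc

lemma norm_sub_le_of_norm_vectorField_le_mul_pow_of_nonneg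
    (hu : ∀ τ ∈ Icc (0 : ℝ) 1, HasDerivAt u (X (u τ)) τ) (h0 : ‖u 0‖ ≤ R - δ) {t : ℝ}
    (ht : t ∈ Icc (0 : ℝ) 1) :
    ‖u t - u 0‖ ≤ K * ‖u 0‖ ^ p / (1 - K * R ^ p / h) := by
  have hball : ∀ τ ∈ Icc (0 : ℝ) 1, ‖u τ‖ ≤ R :=
    norm_le_of_norm_vectorField_lt (hh.le.trans hhδ) (fun z hz => (hX z hz).trans_lt <|
      (by gcongr : K * ‖z‖ ^ p ≤ K * R ^ p).trans_lt (hc.trans_le hhδ)) hu h0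
  obtain ⟨τs, hτs, hmax⟩ := isCompact_Icc.exists_isMaxOn (nonempty_Icc.2 ht.1)
    (fun τ hτ => ((hu τ ⟨hτ.1, hτ.2.trans ht.2⟩).continuousAt.sub
      continuousAt_const).norm.continuousWithinAt)
  have hτs1 : τs ≤ 1 := hτs.2.trans ht.2
  set M := ‖u τs - u 0‖
  have hmax' : ∀ σ ∈ Icc 0 t, ‖u σ - u 0‖ ≤ M := fun σ hσ => hmax hσ
  have hmvt : ∀ ρ, (∀ σ ∈ Icc 0 τs, ‖u σ‖ ≤ ρ) → ρ ≤ R → M ≤ K * ρ ^ p := by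
    intro ρ hρ hρR
    have hρ0 : 0 ≤ ρ := (norm_nonneg _).trans (hρ 0 (left_mem_Icc.2 hτs.1))
    have hbound : ∀ σ ∈ Ico 0 τs, ‖X (u σ)‖ ≤ K * ρ ^ p := fun σ hσ =>
      (hX _ ((hρ σ (Ico_subset_Icc_self hσ)).trans hρR)).trans
        (by gcongr; exact hρ σ (Ico_subset_Icc_self hσ))
    have := norm_image_sub_le_of_norm_deriv_le_segment'
      (fun σ hσ => (hu σ ⟨hσ.1, hσ.2.trans hτs1⟩).hasDerivWithinAt) hbound τs
      (right_mem_Icc.2 hτs.1)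
    exact this.trans (by nlinarith [mul_nonneg hK (pow_nonneg hρ0 p)])
  have hMh : M ≤ h :=
    (hmvt R (fun σ hσ => hball σ ⟨hσ.1, hσ.2.trans hτs1⟩) le_rfl).trans hc.le
  have hM : M ≤ K * (‖u 0‖ + M) ^ p := hmvt _ (fun σ hσ =>
    (norm_le_norm_add_norm_sub' _ _).trans (by gcongr; exact hmax' σ ⟨hσ.1, hσ.2.trans hτs.2⟩))
    (by linarith)
  have hconv := add_pow_le_pow_add_div_mul p (norm_nonneg (u 0)) (norm_nonneg _) hMh
    (by linarith : ‖u 0‖ + h ≤ R)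
  have hc1 : K * R ^ p / h < 1 := (div_lt_one hh).2 hc
  rw [le_div_iff₀ (by linarith)]
  have hMc : M * (K * R ^ p / h) = K * (M / h * R ^ p) := by ring
  nlinarith [hmax' t ⟨ht.1, le_rfl⟩, mul_le_mul_of_nonneg_left hconv hK, norm_nonneg (u t - u 0)]

lemma norm_sub_le_of_norm_vectorField_le_mul_pow
    (hu : ∀ τ : ℝ, |τ| ≤ 1 → HasDerivAt u (X (u τ)) τ) (h0 : ‖u 0‖ ≤ R - δ) {t : ℝ}
    (ht : |t| ≤ 1) :
    ‖u t - u 0‖ ≤ K * ‖u 0‖ ^ p / (1 - K * R ^ p / h) := by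
  rcases le_total 0 t with ht0 | ht0
  · exact norm_sub_le_of_norm_vectorField_le_mul_pow_of_nonneg hK hh hhδ hX hc
      (fun τ hτ => hu τ (abs_le.2 ⟨by linarith [hτ.1], hτ.2⟩)) h0 ⟨ht0, (abs_le.1 ht).2⟩
  · have hv : ∀ τ ∈ Icc (0 : ℝ) 1, HasDerivAt (fun σ => u (-σ)) (-X (u (-τ))) τ :=
      fun τ hτ => by
        simpa [Function.comp_def] using (hu (-τ) (abs_le.2 ⟨by linarith [hτ.2],
          by linarith [hτ.1]⟩)).scomp τ (hasDerivAt_neg τ)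
    simpa using norm_sub_le_of_norm_vectorField_le_mul_pow_of_nonneg (X := fun z => -X z) hK hh
      hhδ (fun z hz => by simpa using hX z hz) hc hv (by simpa using h0)
      ⟨neg_nonneg.2 ht0, by linarith [(abs_le.1 ht).1]⟩

end Flow

theorem flow_deformation_estimate_general (N : ℕ) [NeZero N]
    (s : ℕ) (χ : MvPolynomial (Idx N) ℝ)
    (hχ : χ.IsHomogeneous (2 * s + 2))
    (R' δ : ℝ) (hδ : 0 < δ)
    (hsmall : hamNorm N R' (oplus N χ) < δ / Real.exp 1) :
    (Real.exp 1 / δ) * hamNorm N R' (oplus N χ) < 1 ∧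
    (∀ (u : ℝ → Idx N → ℝ),
        (∀ τ : ℝ, |τ| ≤ 1 → HasDerivAt u (Xvec N (oplus N χ) (u τ)) τ) →
        ‖u 0‖ ≤ R' - δ →
        ∀ t : ℝ, |t| ≤ 1 →
          ‖u t - u 0‖ ≤
            (1 / (1 - (Real.exp 1 / δ) * hamNorm N R' (oplus N χ))) *
              hamNorm N 1 (oplus N χ) * ‖u 0‖ ^ (2 * s + 1)) ∧
    (∀ (u : ℝ → Idx N → ℝ),
        (∀ τ : ℝ, |τ| ≤ 1 → HasDerivAt u (Xvec N (oplus N χ) (u τ)) τ) →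
        enorm₂ (u 0) ≤ R' - δ →
        ∀ t : ℝ, |t| ≤ 1 →
          enorm₂ (u t - u 0) ≤
            (1 / (1 - (Real.exp 1 / δ) * hamNorm N R' (oplus N χ))) *
              hamNorm N 1 (oplus N χ) * enorm₂ (u 0) ^ (2 * s + 1)) := by
  have hH : (oplus N χ).IsHomogeneous (2 * s + 1 + 1) :=
    IsHomogeneous.sum _ _ _ fun _ _ => hχ.rename_isHomogeneous
  have hF := isShiftInvariant_oplus χ
  have hK := hamNorm_nonneg zero_le_one (oplus N χ)
  have hh : 0 < δ / exp 1 := by positivity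
  have hhδ : δ / exp 1 ≤ δ := div_le_self hδ.le (one_le_exp zero_le_one)
  rw [hH.hamNorm_eq] at hsmall ⊢
  rw [show exp 1 / δ * (hamNorm N 1 (oplus N χ) * R' ^ (2 * s + 1)) =
    hamNorm N 1 (oplus N χ) * R' ^ (2 * s + 1) / (δ / exp 1) by field_simp]
  refine ⟨(div_lt_one hh).2 hsmall, fun u hu h0 t ht => ?_, fun u hu h0 t ht => ?_⟩
  · exact (norm_sub_le_of_norm_vectorField_le_mul_pow hK hh hhδ
      (fun z _ => hF.norm_xvec_le hH z) hsmall hu h0 ht).trans_eq (by ring)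
  · simp only [enorm₂_eq_norm_toLp, WithLp.toLp_sub] at h0 ⊢
    refine (norm_sub_le_of_norm_vectorField_le_mul_pow
      (X := fun w => WithLp.toLp 2 (Xvec N (oplus N χ) (WithLp.ofLp w))) hK hh hhδ
      (fun w _ => ?_) hsmall (fun τ hτ => (hu τ hτ).toLp) h0 ht).trans_eq (by ring)
    simpa using hF.norm_toLp_xvec_le hH (Nat.succ_ne_zero _) (WithLp.ofLp w)

/-- Let `𝒳 = χ^⊕` be cyclically symmetric homogeneous of degree
`2s+2` (`s ≥ 1`) and let `T^t` be the time-`t` flow of `X_𝒳` (encoded below by curves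
`u` with `u̇(τ) = X_𝒳(u(τ))` for `|τ| ≤ 1`).  If `0 < δ < R'` and `|X_𝒳|_{R'} < δ/e`,
then `c := (e/δ)|X_𝒳|_{R'} < 1` and for `|t| ≤ 1`, `‖z‖ ≤ R' − δ` one has
`‖T^t(z) − z‖ ≤ (1/(1−c)) |X_𝒳|₁ ‖z‖^{2s+1}`; this holds both for the supremum (`ℓ^∞`)
and the euclidean (`ℓ²`) norm. -/
theorem flow_deformation_estimate (N : ℕ) [NeZero N]
    (s : ℕ) (hs : 1 ≤ s) (χ : MvPolynomial (Idx N) ℝ)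
    (hχ : χ.IsHomogeneous (2 * s + 2))
    (R' δ : ℝ) (hδ : 0 < δ) (hδR : δ < R')
    (hsmall : hamNorm N R' (oplus N χ) < δ / Real.exp 1) :
    (Real.exp 1 / δ) * hamNorm N R' (oplus N χ) < 1 ∧
    (∀ (u : ℝ → Idx N → ℝ),
        (∀ τ : ℝ, |τ| ≤ 1 → HasDerivAt u (Xvec N (oplus N χ) (u τ)) τ) →
        ‖u 0‖ ≤ R' - δ →
        ∀ t : ℝ, |t| ≤ 1 →
          ‖u t - u 0‖ ≤
            (1 / (1 - (Real.exp 1 / δ) * hamNorm N R' (oplus N χ))) *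
              hamNorm N 1 (oplus N χ) * ‖u 0‖ ^ (2 * s + 1)) ∧
    (∀ (u : ℝ → Idx N → ℝ),
        (∀ τ : ℝ, |τ| ≤ 1 → HasDerivAt u (Xvec N (oplus N χ) (u τ)) τ) →
        enorm₂ (u 0) ≤ R' - δ →
        ∀ t : ℝ, |t| ≤ 1 →
          enorm₂ (u t - u 0) ≤
            (1 / (1 - (Real.exp 1 / δ) * hamNorm N R' (oplus N χ))) *
              hamNorm N 1 (oplus N χ) * enorm₂ (u 0) ^ (2 * s + 1)) :=
  flow_deformation_estimate_general N s χ hχ R' δ hδ hsmall
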